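/- arXiv:2310.10556 — 3 statements merged into one kernel-verified Lean document; each statement's English description precedes it below -/
import Mathlib

section
/- Let r, r' : {1, …, m} → ℝ and let ρ_r and ρ_{r'} be the associated softmax distributions. Then for every i ∈ {1, …, m}, |ρ_r(i) − ρ_{r'}(i)| ≤ 2 · max_{1≤j≤m} |r(j) − r'(j)|. -/
/-!
Perturbing every score by at most `ε` changes each weight `exp (r i)` and the normalizer
`∑ j, exp (r j)` by a factor in `[exp (-ε), exp ε]`, so each softmax probability changes by a
factor of at least `exp (-2ε) ≥ 1 - 2ε`. Since probabilities are at most `1`, this is a loss of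
at most `2ε`, and the bound is symmetric in the two score vectors.
-/

open Real Finset

noncomputable def softmax {ι : Type*} [Fintype ι] (r : ι → ℝ) (i : ι) : ℝ :=
  exp (r i) / ∑ j, exp (r j)

section

variable {ι : Type*} [Fintype ι]

lemma sum_exp_pos (r : ι → ℝ) (i : ι) : 0 < ∑ j, exp (r j) :=
  sum_pos (fun j _ => exp_pos (r j)) ⟨i, mem_univ i⟩

lemma softmax_nonneg (r : ι → ℝ) (i : ι) : 0 ≤ softmax r i :=
  div_nonneg (exp_pos _).le (sum_nonneg fun j _ => (exp_pos (r j)).le)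

lemma softmax_le_one (r : ι → ℝ) (i : ι) : softmax r i ≤ 1 :=
  (div_le_one (sum_exp_pos r i)).2 <|
    single_le_sum (fun j _ => (exp_pos (r j)).le) (mem_univ i)

lemma exp_neg_two_mul_mul_softmax_le {r r' : ι → ℝ} {ε : ℝ} (h : ∀ j, |r j - r' j| ≤ ε)
    (i : ι) :
    exp (-(2 * ε)) * softmax r i ≤ softmax r' i := by
  have hweight : exp (r i - ε) ≤ exp (r' i) :=
    exp_le_exp.2 (by linarith [(abs_le.1 (h i)).2])
  have hsum : ∑ j, exp (r' j) ≤ ∑ j, exp (r j + ε) :=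
    sum_le_sum fun j _ => exp_le_exp.2 (by linarith [(abs_le.1 (h j)).1])
  calc exp (-(2 * ε)) * softmax r i
      = exp (r i - ε) / ∑ j, exp (r j + ε) := by
        simp only [softmax, two_mul, neg_add, exp_add, exp_sub, exp_neg, ← sum_mul]
        field_simp
    _ ≤ softmax r' i :=
        div_le_div₀ (exp_pos _).le hweight (sum_exp_pos r' i) hsum

lemma softmax_sub_softmax_le {r r' : ι → ℝ} {ε : ℝ} (h : ∀ j, |r j - r' j| ≤ ε) (i : ι) :
    softmax r i - softmax r' i ≤ 2 * ε := by
  have hε : 0 ≤ 2 * ε := mul_nonneg zero_le_two ((abs_nonneg _).trans (h i))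
  calc softmax r i - softmax r' i
      ≤ (1 - exp (-(2 * ε))) * softmax r i := by
        linarith [exp_neg_two_mul_mul_softmax_le h i]
    _ ≤ 2 * ε * 1 :=
        mul_le_mul (by linarith [add_one_le_exp (-(2 * ε))]) (softmax_le_one r i)
          (softmax_nonneg r i) hε
    _ = 2 * ε := mul_one _

lemma abs_softmax_sub_softmax_le {r r' : ι → ℝ} {ε : ℝ} (h : ∀ j, |r j - r' j| ≤ ε) (i : ι) :
    |softmax r i - softmax r' i| ≤ 2 * ε :=
  abs_sub_le_iff.2 ⟨softmax_sub_softmax_le h i,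
    softmax_sub_softmax_le (fun j => abs_sub_comm (r j) (r' j) ▸ h j) i⟩

end

/-- The softmax distribution `ρ_r(i) = exp(r i) / Σⱼ exp(r j)` is 2-Lipschitz in the
reward with respect to the ℓ∞ norm: `|ρ_r(i) − ρ_{r'}(i)| ≤ 2 · maxⱼ |r j − r' j|`. -/
theorem stmt_3 (m : ℕ) (hm : 0 < m) (r r' : Fin m → ℝ) (i : Fin m) :
    |Real.exp (r i) / (∑ j, Real.exp (r j)) - Real.exp (r' i) / (∑ j, Real.exp (r' j))| ≤
      2 * Finset.univ.sup' (Finset.univ_nonempty_iff.mpr ⟨⟨0, hm⟩⟩) (fun j => |r j - r' j|) :=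
  abs_softmax_sub_softmax_le (fun j => le_sup' (fun j => |r j - r' j|) (mem_univ j)) i
end

section
/- Let (x_k, Υ_k, y_k), k = 1, …, K be data where each Υ_k is a finite set of 3 points of a set 𝒳 and y_k ∈ Υ_k. Let r : 𝒳 → ℝ be the true reward, let 𝒢 be a class of functions 𝒳 → ℝ containing some r_o with sup_{x∈𝒳} |r_o(x) − r(x)| ≤ ε, and let r_l ∈ 𝒢 be any maximizer over g ∈ 𝒢 of the log-likelihood Σ_{k=1}^K log ρ_g(y_k | Υ_k). Then (1/K) Σ_{k=1}^K log( ρ_{r_l}(y_k | Υ_k) / ρ_r(y_k | Υ_k) ) ≥ −4ε. -/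
open Real Finset

lemma sumexp_pos {n : ℕ} [NeZero n] (f : Fin n → ℝ) : 0 < ∑ j, Real.exp (f j) :=
  Finset.sum_pos (fun j _ => Real.exp_pos _) (by simp [Finset.univ_nonempty])

lemma logsum_le {n : ℕ} [NeZero n] (f g : Fin n → ℝ) (ε : ℝ)
    (h : ∀ j, f j - g j ≤ ε) :
    Real.log (∑ j, Real.exp (f j)) ≤ Real.log (∑ j, Real.exp (g j)) + ε := by
  have h1 : ∑ j, Real.exp (f j) ≤ Real.exp ε * ∑ j, Real.exp (g j) := by
    rw [Finset.mul_sum]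
    refine Finset.sum_le_sum fun j _ => ?_
    rw [← Real.exp_add]
    exact Real.exp_le_exp.2 (by linarith [h j])
  calc Real.log (∑ j, Real.exp (f j)) ≤ Real.log (Real.exp ε * ∑ j, Real.exp (g j)) :=
        Real.log_le_log (sumexp_pos f) h1
    _ = Real.log (∑ j, Real.exp (g j)) + ε := by
        rw [Real.log_mul (Real.exp_ne_zero _) (ne_of_gt (sumexp_pos g)), Real.log_exp]; ring

/-- MLE over a class `𝒢` containing an `ε`-uniform approximation `r_o` of the true reward `r`
achieves empirical log-likelihood ratio at least `−4ε`:
`(1/K) Σₖ log(ρ_{r_l}(yₖ|Υₖ) / ρ_r(yₖ|Υₖ)) ≥ −4ε`, where `ρ_g(y|Υ)` is the softmax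
choice probability `exp(g(y)) / Σ_{z∈Υ} exp(g(z))` over a context `Υ` of 3 points. -/
theorem stmt_4 {𝒳 : Type*} (K : ℕ) (hK : 0 < K)
    (Υ : Fin K → Fin 3 → 𝒳) (y : Fin K → Fin 3)
    (r : 𝒳 → ℝ) (𝒢 : Set (𝒳 → ℝ)) (ε : ℝ)
    (r_o : 𝒳 → ℝ) (hro : r_o ∈ 𝒢) (happrox : ∀ x : 𝒳, |r_o x - r x| ≤ ε)
    (r_l : 𝒳 → ℝ) (hrl : r_l ∈ 𝒢)
    (hmax : ∀ g ∈ 𝒢,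
      ∑ k, Real.log (Real.exp (g (Υ k (y k))) / ∑ j, Real.exp (g (Υ k j))) ≤
      ∑ k, Real.log (Real.exp (r_l (Υ k (y k))) / ∑ j, Real.exp (r_l (Υ k j)))) :
    -4 * ε ≤ (1 / (K : ℝ)) * ∑ k, Real.log
      ((Real.exp (r_l (Υ k (y k))) / ∑ j, Real.exp (r_l (Υ k j))) /
       (Real.exp (r (Υ k (y k))) / ∑ j, Real.exp (r (Υ k j)))) := by
  have hε : 0 ≤ ε := le_trans (abs_nonneg _) (happrox (Υ ⟨0, hK⟩ 0))
  -- per-term positivity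
  have ρpos : ∀ (g : 𝒳 → ℝ) (k : Fin K),
      0 < Real.exp (g (Υ k (y k))) / ∑ j, Real.exp (g (Υ k j)) :=
    fun g k => div_pos (Real.exp_pos _) (sumexp_pos _)
  -- split the log of the ratio
  have hsplit : ∀ k : Fin K,
      Real.log ((Real.exp (r_l (Υ k (y k))) / ∑ j, Real.exp (r_l (Υ k j))) /
       (Real.exp (r (Υ k (y k))) / ∑ j, Real.exp (r (Υ k j)))) =
      Real.log (Real.exp (r_l (Υ k (y k))) / ∑ j, Real.exp (r_l (Υ k j))) -
      Real.log (Real.exp (r (Υ k (y k))) / ∑ j, Real.exp (r (Υ k j))) := fun k =>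
    Real.log_div (ne_of_gt (ρpos r_l k)) (ne_of_gt (ρpos r k))
  -- lower bound for r_o per term
  have hterm : ∀ k : Fin K,
      Real.log (Real.exp (r (Υ k (y k))) / ∑ j, Real.exp (r (Υ k j))) - 2 * ε ≤
      Real.log (Real.exp (r_o (Υ k (y k))) / ∑ j, Real.exp (r_o (Υ k j))) := by
    intro k
    rw [Real.log_div (Real.exp_ne_zero _) (ne_of_gt (sumexp_pos _)),
        Real.log_div (Real.exp_ne_zero _) (ne_of_gt (sumexp_pos _)),
        Real.log_exp, Real.log_exp]
    have h1 : Real.log (∑ j, Real.exp (r_o (Υ k j))) ≤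
        Real.log (∑ j, Real.exp (r (Υ k j))) + ε :=
      logsum_le _ _ ε (fun j => (abs_le.1 (happrox (Υ k j))).2)
    have h2 : r (Υ k (y k)) - ε ≤ r_o (Υ k (y k)) := by
      have := (abs_le.1 (happrox (Υ k (y k)))).1; linarith
    linarith
  have hsum : ∑ k, Real.log (Real.exp (r (Υ k (y k))) / ∑ j, Real.exp (r (Υ k j)))
      - 2 * ε * K ≤
      ∑ k, Real.log (Real.exp (r_l (Υ k (y k))) / ∑ j, Real.exp (r_l (Υ k j))) := by
    have := hmax r_o hro
    have hs : ∑ k, (Real.log (Real.exp (r (Υ k (y k))) / ∑ j, Real.exp (r (Υ k j))) - 2 * ε)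
        ≤ ∑ k, Real.log (Real.exp (r_o (Υ k (y k))) / ∑ j, Real.exp (r_o (Υ k j))) :=
      Finset.sum_le_sum fun k _ => hterm k
    rw [Finset.sum_sub_distrib, Finset.sum_const, Finset.card_univ, Fintype.card_fin,
        nsmul_eq_mul] at hs
    linarith
  have hKpos : (0:ℝ) < K := Nat.cast_pos.2 hK
  rw [show (∑ k, Real.log
      ((Real.exp (r_l (Υ k (y k))) / ∑ j, Real.exp (r_l (Υ k j))) /
       (Real.exp (r (Υ k (y k))) / ∑ j, Real.exp (r (Υ k j))))) =
      ∑ k, (Real.log (Real.exp (r_l (Υ k (y k))) / ∑ j, Real.exp (r_l (Υ k j))) -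
      Real.log (Real.exp (r (Υ k (y k))) / ∑ j, Real.exp (r (Υ k j)))) from
    Finset.sum_congr rfl fun k _ => hsplit k, Finset.sum_sub_distrib]
  rw [one_div_mul_eq_div, le_div_iff₀ hKpos]
  nlinarith [hsum, hε, hKpos]
end

section
/- Let 𝒳 be a set, let 𝒢 be a class of functions 𝒳 → ℝ, and for each g ∈ 𝒢 and each context Υ consisting of 3 points of 𝒳 let ρ_g(· | Υ) denote the softmax distribution on Υ induced by g. Suppose 𝒢 admits a (1/(4n))-cover in the sup norm of cardinality N, i.e., there exist g'₁, …, g'_N ∈ 𝒢 with: for every g ∈ 𝒢 there is j with sup_{x∈𝒳}|g(x) − g'_j(x)| ≤ 1/(4n). Then the class Π = {Υ ↦ ρ_g(· | Υ) : g ∈ 𝒢} of vector-valued functions admits a (1/n)-upper-bracketing of cardinality at most N: there exist N functions ρ̄₁, …, ρ̄_N mapping contexts Υ to ℝ³ such that for every g ∈ 𝒢 there is some j with ρ_g(y | Υ) ≤ ρ̄_j(y | Υ) ≤ ρ_g(y | Υ) + 1/n for all contexts Υ and all y ∈ Υ. -/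
open Real Finset

private lemma sum_exp_pos_s9 {𝒳 : Type*} (g : 𝒳 → ℝ) (Υ : Fin 3 → 𝒳) :
    0 < ∑ z, Real.exp (g (Υ z)) :=
  Finset.sum_pos (fun z _ => Real.exp_pos _) ⟨0, Finset.mem_univ 0⟩

private lemma softmax_le_one_s9 {𝒳 : Type*} (g : 𝒳 → ℝ) (Υ : Fin 3 → 𝒳) (i : Fin 3) :
    Real.exp (g (Υ i)) / (∑ z, Real.exp (g (Υ z))) ≤ 1 := by
  rw [div_le_one (sum_exp_pos_s9 g Υ)]
  exact Finset.single_le_sum (f := fun z => Real.exp (g (Υ z)))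
    (fun z _ => (Real.exp_pos _).le) (Finset.mem_univ i)

private lemma softmax_le_mul {𝒳 : Type*} {g h : 𝒳 → ℝ} {ε : ℝ}
    (hgh : ∀ x, |g x - h x| ≤ ε) (Υ : Fin 3 → 𝒳) (i : Fin 3) :
    Real.exp (g (Υ i)) / (∑ z, Real.exp (g (Υ z))) ≤
      Real.exp (2 * ε) * (Real.exp (h (Υ i)) / (∑ z, Real.exp (h (Υ z)))) := by
  have hnum : Real.exp (g (Υ i)) ≤ Real.exp ε * Real.exp (h (Υ i)) := by
    rw [← Real.exp_add]
    exact Real.exp_le_exp.2 (by have := abs_le.1 (hgh (Υ i)); linarith)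
  have hden : Real.exp (-ε) * (∑ z, Real.exp (h (Υ z))) ≤ ∑ z, Real.exp (g (Υ z)) := by
    rw [Finset.mul_sum]
    refine Finset.sum_le_sum fun z _ => ?_
    rw [← Real.exp_add]
    exact Real.exp_le_exp.2 (by have := abs_le.1 (hgh (Υ z)); linarith)
  have hdpos : 0 < Real.exp (-ε) * (∑ z, Real.exp (h (Υ z))) :=
    mul_pos (Real.exp_pos _) (sum_exp_pos_s9 h Υ)
  calc Real.exp (g (Υ i)) / (∑ z, Real.exp (g (Υ z)))
      ≤ (Real.exp ε * Real.exp (h (Υ i))) / (Real.exp (-ε) * (∑ z, Real.exp (h (Υ z)))) :=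
        div_le_div₀ (by positivity) hnum hdpos hden
    _ = Real.exp (2 * ε) * (Real.exp (h (Υ i)) / (∑ z, Real.exp (h (Υ z)))) := by
        rw [Real.exp_neg, two_mul, Real.exp_add]
        field_simp

private lemma min_one_exp_mul_le {ρ t : ℝ} (hρ : 0 ≤ ρ) (ht : 0 < t) :
    min 1 (Real.exp t * ρ) ≤ ρ + t := by
  by_cases h : Real.exp t * ρ ≤ ρ + t
  · exact le_trans (min_le_right _ _) h
  · push_neg at h
    refine le_trans (min_le_left _ _) ?_
    -- from h, ρ > (1 - t), using exp t * (1 - t) ≤ 1 i.e. exp (-t) ≥ 1 - t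
    have h0 : Real.exp (-t) * Real.exp t = 1 := by
      rw [← Real.exp_add]; simp
    have hA : (1 - t) * Real.exp t ≤ 1 := by
      nlinarith [Real.add_one_le_exp (-t), Real.exp_pos t]
    have hB : 1 + t ≤ Real.exp t := by linarith [Real.add_one_le_exp t]
    nlinarith [mul_le_mul_of_nonneg_right hA hρ, Real.exp_pos t]

/-- A `1/(4n)`-sup-norm cover of a reward class `𝒢` induces a `1/n`-upper-bracketing of the
induced class of softmax choice distributions over 3-point contexts:
there exist `N` functions `ρ̄ⱼ` such that for every `g ∈ 𝒢` there is `j` with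
`ρ_g(y|Υ) ≤ ρ̄ⱼ(y|Υ) ≤ ρ_g(y|Υ) + 1/n` for all contexts `Υ` and all `y ∈ Υ`, where
`ρ_g(y|Υ) = exp(g(y)) / Σ_{z∈Υ} exp(g(z))`. -/
theorem stmt_9 {𝒳 : Type*} (𝒢 : Set (𝒳 → ℝ)) (n : ℕ) (hn : 0 < n)
    (N : ℕ) (g' : Fin N → 𝒳 → ℝ) (hg'mem : ∀ j, g' j ∈ 𝒢)
    (hcover : ∀ g ∈ 𝒢, ∃ j, ∀ x : 𝒳, |g x - g' j x| ≤ 1 / (4 * (n : ℝ))) :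
    ∃ ρbar : Fin N → (Fin 3 → 𝒳) → Fin 3 → ℝ,
      ∀ g ∈ 𝒢, ∃ j, ∀ (Υ : Fin 3 → 𝒳) (i : Fin 3),
        Real.exp (g (Υ i)) / (∑ z, Real.exp (g (Υ z))) ≤ ρbar j Υ i ∧
        ρbar j Υ i ≤ Real.exp (g (Υ i)) / (∑ z, Real.exp (g (Υ z))) + 1 / (n : ℝ) := by
  have hnpos : (0:ℝ) < n := Nat.cast_pos.2 hn
  set ε : ℝ := 1 / (4 * (n : ℝ)) with hε
  refine ⟨fun j Υ i => min 1 (Real.exp (2 * ε) *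
      (Real.exp (g' j (Υ i)) / (∑ z, Real.exp (g' j (Υ z))))), ?_⟩
  intro g hg
  obtain ⟨j, hj⟩ := hcover g hg
  refine ⟨j, fun Υ i => ?_⟩
  constructor
  · exact le_min (softmax_le_one_s9 g Υ i) (softmax_le_mul hj Υ i)
  · have hj' : ∀ x, |g' j x - g x| ≤ ε := fun x => by
      rw [abs_sub_comm]; exact hj x
    have h1 : Real.exp (2 * ε) * (Real.exp (g' j (Υ i)) / (∑ z, Real.exp (g' j (Υ z)))) ≤
        Real.exp (2 * ε) * (Real.exp (2 * ε) *
          (Real.exp (g (Υ i)) / (∑ z, Real.exp (g (Υ z))))) :=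
      mul_le_mul_of_nonneg_left (softmax_le_mul hj' Υ i) (Real.exp_pos _).le
    have h2 : Real.exp (2 * ε) * (Real.exp (2 * ε) *
        (Real.exp (g (Υ i)) / (∑ z, Real.exp (g (Υ z))))) =
        Real.exp (1 / (n:ℝ)) * (Real.exp (g (Υ i)) / (∑ z, Real.exp (g (Υ z)))) := by
      rw [← mul_assoc, ← Real.exp_add]
      have : 2 * ε + 2 * ε = 1 / (n:ℝ) := by
        rw [hε]; ring
      rw [this]
    have h3 : min 1 (Real.exp (2 * ε) *
        (Real.exp (g' j (Υ i)) / (∑ z, Real.exp (g' j (Υ z))))) ≤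
        min 1 (Real.exp (1 / (n:ℝ)) * (Real.exp (g (Υ i)) / (∑ z, Real.exp (g (Υ z))))) := by
      exact min_le_min le_rfl (h2 ▸ h1)
    refine h3.trans (min_one_exp_mul_le ?_ ?_)
    · positivity
    · positivity
end
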